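/- arXiv:1907.09280 — 2 statements merged into one kernel-verified Lean document; each statement's English description precedes it below -/
import Mathlib

section
/- For all positive integers n, m and c with c ≤ ⌈log₂ m⌉, the number of monotone nondecreasing functions f : Fin n → Fin m is at most (n+1)^(2^c − 1) · 2^(n·(⌈log₂ m⌉ − c)). (This is the information-theoretic content of the paper's Lemma 2: a sorted list of n integers from the universe [0, m−1] can be re-encoded so that cn of its n·⌈log₂ m⌉ bits become free, up to storing 2^c − 1 positions in [0, n]; the most significant c bits of all entries form a nondecreasing sequence determined by at most 2^c − 1 threshold positions, and the remaining ⌈log₂ m⌉ − c bits of each entry are arbitrary.) -/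
/-!
Write each entry in base 2 with `⌈log₂ m⌉` bits and split it into its top `c` bits and its
remaining `⌈log₂ m⌉ - c` bits. The low parts are arbitrary, giving the factor
`2 ^ (n * (⌈log₂ m⌉ - c))`. The high parts form a monotone map `Fin n → Fin (2 ^ c)`, and a
monotone map `g : Fin n → Fin k` is determined by the `k - 1` counts `#{i | g i ≤ j}`, `j < k - 1`,
each in `[0, n]`; hence there are at most `(n + 1) ^ (2 ^ c - 1)` of them.
-/

open Finset

theorem Monotone.le_iff_lt_card_filter_le {α : Type*} [Preorder α] [DecidableLE α] {n : ℕ}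
    {g : Fin n → α} (hg : Monotone g) (i : Fin n) (a : α) :
    g i ≤ a ↔ (i : ℕ) < #{x | g x ≤ a} := by
  constructor
  · intro hi
    have hsub : Iic i ⊆ ({x | g x ≤ a} : Finset (Fin n)) := fun x hx =>
      mem_filter.mpr ⟨mem_univ x, (hg (mem_Iic.mp hx)).trans hi⟩
    simpa using card_le_card hsub
  · intro hlt
    by_contra hi
    have hsub : ({x | g x ≤ a} : Finset (Fin n)) ⊆ Iio i := fun x hx => by
      rw [mem_Iio]
      by_contra hix
      exact hi ((hg (not_lt.mp hix)).trans (mem_filter.mp hx).2)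
    have := card_le_card hsub
    rw [Fin.card_Iio] at this
    omega

-- The count for `j = k - 1` is always `n`, so it is left out.
def Fin.thresholds {n k : ℕ} (g : Fin n → Fin k) (j : Fin (k - 1)) : Fin (n + 1) :=
  ⟨#{i | (g i : ℕ) ≤ j}, Nat.lt_succ_of_le ((card_le_univ _).trans_eq (Fintype.card_fin n))⟩

theorem Fin.le_of_thresholds_eq {n k : ℕ} {g g' : Fin n → Fin k} (hg : Monotone g)
    (hg' : Monotone g') (h : Fin.thresholds g = Fin.thresholds g') (i : Fin n) : g' i ≤ g i := by
  by_contra! hlt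
  have hj : (g i : ℕ) < k - 1 := by omega
  have hcount : #{x | (g x : ℕ) ≤ g i} = #{x | (g' x : ℕ) ≤ g i} :=
    congrArg Fin.val (congrFun h ⟨g i, hj⟩)
  have hi : (i : ℕ) < #{x | (g x : ℕ) ≤ g i} :=
    ((Fin.val_strictMono.monotone.comp hg).le_iff_lt_card_filter_le i _).mp le_rfl
  have hi' : (g' i : ℕ) ≤ g i :=
    ((Fin.val_strictMono.monotone.comp hg').le_iff_lt_card_filter_le i _).mpr (hcount ▸ hi)
  exact hlt.not_ge hi'

theorem Fin.card_monotone_le (n k : ℕ) :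
    Nat.card {g : Fin n → Fin k // Monotone g} ≤ (n + 1) ^ (k - 1) := by
  have hinj : Function.Injective fun g : {g : Fin n → Fin k // Monotone g} => Fin.thresholds g.1 :=
    fun g g' h => Subtype.ext <| funext fun i =>
      le_antisymm (Fin.le_of_thresholds_eq g'.2 g.2 h.symm i) (Fin.le_of_thresholds_eq g.2 g'.2 h i)
  simpa using Nat.card_le_card_of_injective _ hinj

theorem OrderEmbedding.card_monotone_le {ι α β : Type*} [Preorder ι] [Preorder α] [Preorder β]
    [Finite ι] [Finite β] (e : α ↪o β) :
    Nat.card {f : ι → α // Monotone f} ≤ Nat.card {f : ι → β // Monotone f} :=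
  Nat.card_le_card_of_injective (fun f => ⟨e ∘ f.1, e.monotone.comp f.2⟩) fun _ _ h =>
    Subtype.ext <| e.injective.comp_left (congrArg Subtype.val h)

theorem Fin.card_monotone_mul_le {ι : Type*} [Preorder ι] [Finite ι] (a b : ℕ) :
    Nat.card {f : ι → Fin (a * b) // Monotone f} ≤
      Nat.card {g : ι → Fin a // Monotone g} * b ^ Nat.card ι := by
  have hdiv : Monotone (Fin.divNat : Fin (a * b) → Fin a) := fun x y hxy =>
    Fin.le_def.mpr (Nat.div_le_div_right hxy)
  have hinj : Function.Injective fun f : {f : ι → Fin (a * b) // Monotone f} =>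
      ((⟨Fin.divNat ∘ f.1, hdiv.comp f.2⟩ : {g : ι → Fin a // Monotone g}), Fin.modNat ∘ f.1) := by
    intro f g hfg
    simp only [Prod.mk.injEq, Subtype.mk.injEq] at hfg
    exact Subtype.ext <| funext fun i => finProdFinEquiv.symm.injective <|
      Prod.ext (congrFun hfg.1 i) (congrFun hfg.2 i)
  simpa [Nat.card_fun] using Nat.card_le_card_of_injective _ hinj

theorem sorted_count_le_positions_mul_lowbits_general
    (n m c : ℕ)
    (hcm : c ≤ Nat.clog 2 m) :
    Nat.card {f : Fin n → Fin m // Monotone f} ≤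
      (n + 1) ^ (2 ^ c - 1) * 2 ^ (n * (Nat.clog 2 m - c)) := by
  have hm : m ≤ 2 ^ c * 2 ^ (Nat.clog 2 m - c) := by
    rw [← pow_add, Nat.add_sub_cancel' hcm]
    exact Nat.le_pow_clog one_lt_two m
  calc Nat.card {f : Fin n → Fin m // Monotone f}
      ≤ Nat.card {f : Fin n → Fin (2 ^ c * 2 ^ (Nat.clog 2 m - c)) // Monotone f} :=
        (Fin.castLEOrderEmb hm).card_monotone_le
    _ ≤ Nat.card {g : Fin n → Fin (2 ^ c) // Monotone g} * (2 ^ (Nat.clog 2 m - c)) ^ n := by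
        simpa using Fin.card_monotone_mul_le (ι := Fin n) _ _
    _ ≤ (n + 1) ^ (2 ^ c - 1) * 2 ^ (n * (Nat.clog 2 m - c)) := by
        rw [← pow_mul, mul_comm _ n]
        exact Nat.mul_le_mul_right _ (Fin.card_monotone_le n _)

/-- Information-theoretic content of Lemma 2: the number of monotone nondecreasing
functions `f : Fin n → Fin m` is at most `(n+1)^(2^c - 1) * 2^(n * (⌈log₂ m⌉ - c))`
for any `c ≤ ⌈log₂ m⌉`. -/
theorem sorted_count_le_positions_mul_lowbits
    (n m c : ℕ) (hn : 0 < n) (hm : 0 < m) (hc : 0 < c)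
    (hcm : c ≤ Nat.clog 2 m) :
    Nat.card {f : Fin n → Fin m // Monotone f} ≤
      (n + 1) ^ (2 ^ c - 1) * 2 ^ (n * (Nat.clog 2 m - c)) :=
  sorted_count_le_positions_mul_lowbits_general n m c hcm
end

section
/- For all positive integers n and m with n ≤ m, the number N of monotone nondecreasing functions f : Fin n → Fin m satisfies N · 2^(n·⌊log₂ n⌋) ≤ 2^(n·⌈log₂ m⌉ + 2n). Equivalently, a sorted list of n integers from the universe [0, m−1] can be injectively encoded into n·⌈log₂ m⌉ bits in which the last n·⌊log₂ n⌋ − 2n bits are all zero. (This is the information-theoretic content of the paper's Theorem 4, proved via the Elias–Fano encoding: the top ⌊log₂ n⌋ bits of all entries form a nondecreasing sequence over at most n values, which can be encoded in at most 2n bits, while the remaining ⌈log₂ m⌉ − ⌊log₂ n⌋ bits of each entry are arbitrary.) -/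
/-!
Elias–Fano: split each entry `x < m ≤ 2^L * B` (with `L = ⌊log₂ n⌋`, `B = 2^(⌈log₂ m⌉ - L)`) into
its high part `x / B < 2^L` and its low part `x % B < B`. The low parts are arbitrary, costing
`B^n`. The high parts form a monotone sequence `g` in `Fin (2^L)`, and `i ↦ g i + i` is strictly
increasing into `Fin (n + 2^L)`, so `g` is determined by a subset of a set of size `n + 2^L ≤ 2n`.
-/

theorem card_monotone_fin_le_two_pow (n h : ℕ) :
    Nat.card {g : Fin n → Fin h // Monotone g} ≤ 2 ^ (n + h) := by
  let spread (g : {g : Fin n → Fin h // Monotone g}) (i : Fin n) : Fin (n + h) :=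
    ⟨g.1 i + i, by omega⟩
  have spread_strictMono (g) : StrictMono (spread g) := fun i j hij => by
    have hg : (g.1 i : ℕ) ≤ g.1 j := g.2 hij.le
    simp only [spread, Fin.mk_lt_mk]
    omega
  have spread_range_injective : Function.Injective fun g => Set.range (spread g) := by
    intro f g hfg
    have hspread := ((spread_strictMono f).range_inj (spread_strictMono g)).mp hfg
    ext i
    have := congrArg Fin.val (congrFun hspread i)
    simp only [spread] at this
    omega
  simpa [Nat.card_eq_fintype_card, Fintype.card_set] using
    Nat.card_le_card_of_injective _ spread_range_injective

theorem card_monotone_fin_le_mul_pow {n m h B : ℕ} (hm : m ≤ h * B) :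
    Nat.card {f : Fin n → Fin m // Monotone f} ≤
      Nat.card {g : Fin n → Fin h // Monotone g} * B ^ n := by
  have hlt (x : Fin m) : (x : ℕ) < B * h := x.2.trans_le (hm.trans_eq (mul_comm h B))
  have hB (x : Fin m) : 0 < B := Nat.pos_of_ne_zero fun hB0 => by simpa [hB0] using hlt x
  let split (f : {f : Fin n → Fin m // Monotone f}) :
      {g : Fin n → Fin h // Monotone g} × (Fin n → Fin B) :=
    (⟨fun i => ⟨f.1 i / B, Nat.div_lt_of_lt_mul (hlt _)⟩,
      fun _ _ hij => Nat.div_le_div_right (f.2 hij)⟩,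
     fun i => ⟨f.1 i % B, Nat.mod_lt _ (hB (f.1 i))⟩)
  have split_injective : Function.Injective split := by
    intro f g hfg
    simp only [split, Prod.ext_iff, Subtype.ext_iff, funext_iff, Fin.ext_iff] at hfg
    ext i
    rw [← Nat.div_add_mod (f.1 i) B, ← Nat.div_add_mod (g.1 i) B, hfg.1 i, hfg.2 i]
  simpa [Nat.card_prod, Nat.card_fun] using Nat.card_le_card_of_injective _ split_injective

theorem sorted_count_mul_savings_le_general
    (n m : ℕ) (hn : 0 < n) (hnm : n ≤ m) :
    Nat.card {f : Fin n → Fin m // Monotone f} * 2 ^ (n * Nat.log 2 n) ≤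
      2 ^ (n * Nat.clog 2 m + 2 * n) := by
  set L := Nat.log 2 n
  set k := Nat.clog 2 m
  have hLk : L ≤ k := (Nat.log_mono_right hnm).trans (Nat.log_le_clog 2 m)
  have hLn : 2 ^ L ≤ n := Nat.pow_log_le_self 2 hn.ne'
  have hm : m ≤ 2 ^ L * 2 ^ (k - L) := by
    rw [← pow_add, Nat.add_sub_cancel' hLk]
    exact Nat.le_pow_clog one_lt_two m
  have hcard := (card_monotone_fin_le_mul_pow hm).trans
    (Nat.mul_le_mul_right _ (card_monotone_fin_le_two_pow n (2 ^ L)))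
  have hexp : (k - L) * n + n * L = n * k := by
    rw [Nat.sub_mul, mul_comm n L, mul_comm n k,
      Nat.sub_add_cancel (Nat.mul_le_mul_right n hLk)]
  calc Nat.card {f : Fin n → Fin m // Monotone f} * 2 ^ (n * L)
      ≤ 2 ^ (n + 2 ^ L) * (2 ^ (k - L)) ^ n * 2 ^ (n * L) := Nat.mul_le_mul_right _ hcard
    _ = 2 ^ (n + 2 ^ L + n * k) := by rw [← pow_mul, ← pow_add, ← pow_add, add_assoc, hexp]
    _ ≤ 2 ^ (n * k + 2 * n) := Nat.pow_le_pow_right two_pos (by omega)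

/-- Information-theoretic content of Theorem 4 (Elias–Fano): the number `N` of monotone
nondecreasing functions `f : Fin n → Fin m` satisfies
`N * 2^(n * ⌊log₂ n⌋) ≤ 2^(n * ⌈log₂ m⌉ + 2n)`, i.e. a sorted list of `n` integers from
`[0, m-1]` can be encoded into `n⌈log₂ m⌉` bits whose last `n⌊log₂ n⌋ - 2n` bits are zero. -/
theorem sorted_count_mul_savings_le
    (n m : ℕ) (hn : 0 < n) (hm : 0 < m) (hnm : n ≤ m) :
    Nat.card {f : Fin n → Fin m // Monotone f} * 2 ^ (n * Nat.log 2 n) ≤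
      2 ^ (n * Nat.clog 2 m + 2 * n) :=
  sorted_count_mul_savings_le_general n m hn hnm
end
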